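/- Let H(G,K,ψ) = {ψ*f*ψ : f ∈ L(G)} = {f ∈ L(G) : f = ψ*f*ψ}. Then H(G,K,ψ) is an involutive subalgebra of L(G) contained in I(G,K,ψ) = {f ∈ L(G) : f*ψ = f}, and the map S_v : ~H(G,K,θ) → L(G) defined by (S_v F)(g) = d_θ·⟨F(g)v, v⟩ is a bijective *-anti-isomorphism of ~H(G,K,θ) onto H(G,K,ψ), i.e. it is linear bijective with S_v(F₁*F₂) = S_v(F₂)*S_v(F₁) and S_v(F*) = (S_v F)*. Moreover (1/√d_θ)·S_v is an isometry, every f ∈ H(G,K,ψ) is supported in the union of the double cosets KsK with s ∈ S₀, and T_v(ξ(F)f) = (T_v f)*(S_v F) for all f ∈ Ind_K^G V and F ∈ ~H(G,K,θ). -/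

import Mathlib

open scoped BigOperators ComplexConjugate Classical

set_option linter.unusedSectionVars false
set_option synthInstance.maxHeartbeats 1000000
set_option maxHeartbeats 1000000

noncomputable section

namespace MFT

variable {G : Type} [Group G] [Fintype G]
variable {V : Type} [NormedAddCommGroup V] [InnerProductSpace ℂ V] [FiniteDimensional ℂ V]

/-- Left translation of functions on `G`: `(translate h f) g = f (h⁻¹ * g)`.
This is the left regular action of `G`. -/
def translate {A : Type} (h : G) (f : G → A) : G → A := fun g => f (h⁻¹ * g)

/-- A representation by linear automorphisms is unitary if it preserves the inner product. -/
def IsUnitaryRep {H W : Type} [Group H] [NormedAddCommGroup W] [InnerProductSpace ℂ W]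
    (ρ : H →* (W ≃ₗ[ℂ] W)) : Prop :=
  ∀ (h : H) (x y : W), (inner ℂ (ρ h x) (ρ h y) : ℂ) = (inner ℂ x y : ℂ)

/-- Irreducibility of a representation: the space is nonzero and has no proper nonzero
invariant subspace. -/
def IsIrreducibleRep {H W : Type} [Group H] [AddCommGroup W] [Module ℂ W]
    (ρ : H →* (W ≃ₗ[ℂ] W)) : Prop :=
  (⊥ : Submodule ℂ W) ≠ ⊤ ∧
    ∀ p : Submodule ℂ W, (∀ (h : H) (x : W), x ∈ p → ρ h x ∈ p) → p = ⊥ ∨ p = ⊤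

variable (K : Subgroup G) (θ : ↥K →* (V ≃ₗ[ℂ] V))

/-- The space `Ind_K^G V` of the representation induced by `θ`:
functions `f : G → V` with `f (g k) = θ k⁻¹ (f g)`. -/
def ind : Submodule ℂ (G → V) where
  carrier := {f | ∀ (g : G) (k : K), f (g * (k : G)) = θ k⁻¹ (f g)}
  add_mem' := by
    intro f₁ f₂ h₁ h₂ g k
    simp only [Pi.add_apply, h₁ g k, h₂ g k, map_add]
  zero_mem' := by intro g k; simp
  smul_mem' := by
    intro c f hf g k
    simp only [Pi.smul_apply, hf g k, map_smul]

theorem translate_mem_ind {f : G → V} (hf : f ∈ ind K θ) (h : G) : translate h f ∈ ind K θ := by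
  intro g k
  simpa [translate, mul_assoc] using hf (h⁻¹ * g) k

/-- The left regular action of `G` on the induced space, `λ(h) f = f (h⁻¹ ·)`. -/
def lamL (h : G) : ↥(ind K θ) →ₗ[ℂ] ↥(ind K θ) where
  toFun f := ⟨translate h ↑f, translate_mem_ind K θ f.2 h⟩
  map_add' f₁ f₂ := by apply Subtype.ext; funext g; simp [translate]
  map_smul' c f := by apply Subtype.ext; funext g; simp [translate]

instance : AddCommGroup (↥(ind K θ) →ₗ[ℂ] ↥(ind K θ)) := LinearMap.addCommGroup

instance : Module ℂ (↥(ind K θ) →ₗ[ℂ] ↥(ind K θ)) := LinearMap.module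

/-- The Hecke algebra condition: `F (k₁ g k₂) = θ k₂⁻¹ ∘ F g ∘ θ k₁⁻¹`. -/
def IsHecke (F : G → (V →ₗ[ℂ] V)) : Prop :=
  ∀ (g : G) (k₁ k₂ : K),
    F ((k₁ : G) * g * (k₂ : G)) = (θ k₂⁻¹).toLinearMap ∘ₗ F g ∘ₗ (θ k₁⁻¹).toLinearMap

/-- Convolution on the Hecke algebra: `(F₁ * F₂) g = ∑ h, F₁ (h⁻¹ g) ∘ F₂ h`. -/
def heckeConv (F₁ F₂ : G → (V →ₗ[ℂ] V)) : G → (V →ₗ[ℂ] V) :=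
  fun g => ∑ h : G, F₁ (h⁻¹ * g) ∘ₗ F₂ h

/-- Involution on the Hecke algebra: `F* g = (F g⁻¹)*`. -/
def heckeStar (F : G → (V →ₗ[ℂ] V)) : G → (V →ₗ[ℂ] V) :=
  fun g => LinearMap.adjoint (F g⁻¹)

/-- The inner product on the Hecke algebra:
`⟨F₁, F₂⟩ = ∑ g, (dim V)⁻¹ tr (F₂(g)* ∘ F₁(g))`. -/
def heckeInner (F₁ F₂ : G → (V →ₗ[ℂ] V)) : ℂ :=
  ∑ g : G, (Module.finrank ℂ V : ℂ)⁻¹ *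
    LinearMap.trace ℂ V (LinearMap.adjoint (F₂ g) ∘ₗ F₁ g)

/-- `(ξ F) f g = ∑ h, F (h⁻¹ g) (f h)`. -/
def xiFun (F : G → (V →ₗ[ℂ] V)) (f : G → V) : G → V := fun g => ∑ h : G, F (h⁻¹ * g) (f h)

/-- `ξ F` as a linear endomorphism of `G → V`. -/
def xiL (F : G → (V →ₗ[ℂ] V)) : (G → V) →ₗ[ℂ] (G → V) where
  toFun := xiFun F
  map_add' f₁ f₂ := by funext g; simp [xiFun, Finset.sum_add_distrib]
  map_smul' c f := by funext g; simp [xiFun, Finset.smul_sum]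

/-- The paper's inner product on the induced space:
`⟨f₁, f₂⟩ = |K|⁻¹ ∑ g, ⟨f₁ g, f₂ g⟩_V` (conjugate-linear in the second variable). -/
def innerInd (f₁ f₂ : G → V) : ℂ := (Nat.card K : ℂ)⁻¹ * ∑ g : G, (inner ℂ (f₂ g) (f₁ g) : ℂ)

/-- Convolution of complex valued functions on `G`. -/
def convC (f₁ f₂ : G → ℂ) : G → ℂ := fun g => ∑ h : G, f₁ h * f₂ (h⁻¹ * g)

/-- The involution `f* g = conj (f g⁻¹)` on `L(G)`. -/
def starC (f : G → ℂ) : G → ℂ := fun g => conj (f g⁻¹)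

/-- The paper's inner product on `L(G)`: `⟨f₁, f₂⟩ = ∑ g, f₁ g • conj (f₂ g)`. -/
def innerC (f₁ f₂ : G → ℂ) : ℂ := ∑ g : G, f₁ g * conj (f₂ g)

/-- The function `ψ (k) = (d_θ/|K|) ⟨v, θ k v⟩` on `K`, extended by `0` on `G \ K`. -/
def psi (v : V) : G → ℂ := fun g =>
  if h : g ∈ K then ((Module.finrank ℂ V : ℂ) / (Nat.card K : ℂ)) * (inner ℂ (θ ⟨g, h⟩ v) v : ℂ)
  else 0

/-- `(T_v f) g = √(d_θ/|K|) ⟨f g, v⟩`. -/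
def Tv (v : V) (f : G → V) : G → ℂ := fun g =>
  (Real.sqrt ((Module.finrank ℂ V : ℝ) / (Nat.card K : ℝ)) : ℂ) * (inner ℂ v (f g) : ℂ)

/-- The Hecke algebra `H(G,K,ψ) = {f : f = ψ * f * ψ}` as a set. -/
def HSet (v : V) : Set (G → ℂ) := {f | convC (convC (psi K θ v) f) (psi K θ v) = f}

/-- `(S_v F) g = d_θ ⟨F g v, v⟩`. -/
def Sv (v : V) (F : G → (V →ₗ[ℂ] V)) : G → ℂ :=
  fun g => (Module.finrank ℂ V : ℂ) * (inner ℂ v (F g v) : ℂ)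

/-- A spherical function: an element of `H(G,K,ψ)` taking value `1` at the identity which
is an eigenvector of all convolution operators coming from `H(G,K,ψ)`. -/
def IsSpherical (v : V) (φ : G → ℂ) : Prop :=
  φ ∈ HSet K θ v ∧ φ 1 = 1 ∧ ∀ f ∈ HSet K θ v, ∃ c : ℂ, convC φ f = c • φ

/-- The intertwining space `Hom_{K_s}(Res^K_{K_s} θ, θ^s)` where `K_s = K ∩ s K s⁻¹`
and `θ^s (x) = θ (s⁻¹ x s)`. -/
def interSpace (s : G) : Submodule ℂ (V →ₗ[ℂ] V) where
  carrier := {T | ∀ (x : G) (hx : x ∈ K) (hx' : s⁻¹ * x * s ∈ K),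
      T ∘ₗ (θ ⟨x, hx⟩).toLinearMap = (θ ⟨s⁻¹ * x * s, hx'⟩).toLinearMap ∘ₗ T}
  add_mem' := by
    intro a b ha hb x hx hx'
    simp only [LinearMap.add_comp, LinearMap.comp_add, ha x hx hx', hb x hx hx']
  zero_mem' := by
    intro x hx hx'
    simp
  smul_mem' := by
    intro c a ha x hx hx'
    simp only [LinearMap.smul_comp, LinearMap.comp_smul, ha x hx hx']

/-- `S` is a complete set of representatives of the double cosets `K\G/K`. -/
def IsDoubleCosetReps (S : Finset G) : Prop :=
  ∀ g : G, ∃! s : G, s ∈ S ∧ ∃ k₁ k₂ : K, g = (k₁ : G) * s * (k₂ : G)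

/-- The commutant `End_G(Ind_K^G V)`. -/
def commutant : Submodule ℂ (↥(ind K θ) →ₗ[ℂ] ↥(ind K θ)) where
  carrier := {T | ∀ (h : G) (f : ↥(ind K θ)), T (lamL K θ h f) = lamL K θ h (T f)}
  add_mem' := by
    intro a b ha hb h f
    simp [ha h f, hb h f]
  zero_mem' := by intro h f; simp
  smul_mem' := by
    intro c a ha h f
    simp [ha h f]

/-- The space `Hom_G(W, Ind_K^G V)` of `G`-equivariant linear maps from `(σ, W)` to the
induced representation. -/
def homGInd {W : Type} [AddCommGroup W] [Module ℂ W] (σ : G →* (W ≃ₗ[ℂ] W)) :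
    Submodule ℂ (W →ₗ[ℂ] (G → V)) where
  carrier := {A | (∀ w : W, A w ∈ ind K θ) ∧ ∀ (g : G) (w : W), A (σ g w) = translate g (A w)}
  add_mem' := by
    rintro A B ⟨hA₁, hA₂⟩ ⟨hB₁, hB₂⟩
    refine ⟨fun w => (ind K θ).add_mem (hA₁ w) (hB₁ w), fun g w => ?_⟩
    funext x
    simp [translate, hA₂ g w, hB₂ g w, Pi.add_apply]
  zero_mem' := by
    refine ⟨fun w => (ind K θ).zero_mem, fun g w => ?_⟩
    funext x
    simp [translate]
  smul_mem' := by
    rintro c A ⟨hA₁, hA₂⟩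
    refine ⟨fun w => (ind K θ).smul_mem c (hA₁ w), fun g w => ?_⟩
    funext x
    simp [translate, hA₂ g w]

/-- `Ind_K^G θ` is multiplicity-free: every irreducible representation of `G` occurs with
multiplicity at most `1`. -/
def IsMultFree : Prop :=
  ∀ (W : Type) [AddCommGroup W] [Module ℂ W] [FiniteDimensional ℂ W]
    (σ : G →* (W ≃ₗ[ℂ] W)), IsIrreducibleRep σ → Module.finrank ℂ ↥(homGInd K θ σ) ≤ 1

theorem convC_add_left (f₁ f₂ g : G → ℂ) : convC (f₁ + f₂) g = convC f₁ g + convC f₂ g := by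
  funext x
  simp [convC, add_mul, Finset.sum_add_distrib]

theorem convC_add_right (f g₁ g₂ : G → ℂ) : convC f (g₁ + g₂) = convC f g₁ + convC f g₂ := by
  funext x
  simp [convC, mul_add, Finset.sum_add_distrib]

theorem convC_smul_left (c : ℂ) (f g : G → ℂ) : convC (c • f) g = c • convC f g := by
  funext x
  simp [convC, Finset.mul_sum, mul_assoc]

theorem convC_smul_right (c : ℂ) (f g : G → ℂ) : convC f (c • g) = c • convC f g := by
  funext x
  simp [convC, Finset.mul_sum, mul_left_comm]

theorem convC_zero_left (g : G → ℂ) : convC 0 g = 0 := by funext x; simp [convC]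

theorem convC_zero_right (f : G → ℂ) : convC f 0 = 0 := by funext x; simp [convC]

/-- The Hecke algebra `H(G,K,ψ)` as a subspace of `L(G)`. -/
def heckeSub (v : V) : Submodule ℂ (G → ℂ) where
  carrier := HSet K θ v
  add_mem' := by
    intro a b ha hb
    have ha' : convC (convC (psi K θ v) a) (psi K θ v) = a := ha
    have hb' : convC (convC (psi K θ v) b) (psi K θ v) = b := hb
    show convC (convC (psi K θ v) (a + b)) (psi K θ v) = a + b
    rw [convC_add_right, convC_add_left, ha', hb']
  zero_mem' := by
    show convC (convC (psi K θ v) 0) (psi K θ v) = 0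
    rw [convC_zero_right, convC_zero_left]
  smul_mem' := by
    intro c a ha
    have ha' : convC (convC (psi K θ v) a) (psi K θ v) = a := ha
    show convC (convC (psi K θ v) (c • a)) (psi K θ v) = c • a
    rw [convC_smul_right, convC_smul_left, ha']

/-- The subspace `I(G,K,ψ) = {f ∈ L(G) : f * ψ = f}`. -/
def ISub (v : V) : Submodule ℂ (G → ℂ) where
  carrier := {φ | convC φ (psi K θ v) = φ}
  add_mem' := by
    intro a b ha hb
    have ha' : convC a (psi K θ v) = a := ha
    have hb' : convC b (psi K θ v) = b := hb
    show convC (a + b) (psi K θ v) = a + b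
    rw [convC_add_left, ha', hb']
  zero_mem' := by
    show convC 0 (psi K θ v) = 0
    rw [convC_zero_left]
  smul_mem' := by
    intro c a ha
    have ha' : convC a (psi K θ v) = a := ha
    show convC (c • a) (psi K θ v) = c • a
    rw [convC_smul_left, ha']

/-- The subspace of `L(G)` spanned by the left translates of `φ`. -/
def sphSpan (φ : G → ℂ) : Submodule ℂ (G → ℂ) :=
  Submodule.span ℂ (Set.range fun g : G => translate g φ)

/-- A submodule of functions on `G` invariant under all left translations. -/
def IsInvariantSub {A : Type} [AddCommGroup A] [Module ℂ A] (p : Submodule ℂ (G → A)) : Prop :=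
  ∀ h : G, ∀ f ∈ p, translate h f ∈ p

/-- `p` is an irreducible `G`-invariant subspace of the induced representation. -/
def IsIrredSubOfInd (p : Submodule ℂ (G → V)) : Prop :=
  p ≤ ind K θ ∧ IsInvariantSub p ∧ p ≠ ⊥ ∧
    ∀ q : Submodule ℂ (G → V), q ≤ p → IsInvariantSub q → q = ⊥ ∨ q = p


/-!
Everything rests on Schur's lemma for `θ`: the operator `∑_{k ∈ K} |θ(k)v⟩⟨θ(k)v|` commutes
with `θ`, hence equals `(|K|/d_θ) • id`. This orthogonality relation makes `ψ` a self-adjoint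
idempotent of `L(G)`, which gives the subalgebra statements, and it splits inner products on
`Ind_K^G V` as `∑_g ⟪f₁ g, f₂ g⟫ = d_θ ∑_g ⟪f₁ g, v⟫⟪v, f₂ g⟫`. Applied to `g ↦ F(g)v` and
`h ↦ F(h⁻¹g)* v`, both in `Ind_K^G V` for a Hecke function `F`, this yields the
anti-multiplicativity and the isometry property of `S_v` and the intertwining with `ξ`.
The inverse of `S_v` is the `K × K`-average of `g ↦ d_θ f(g) |v⟩⟨v|`, and since `F(s)` lies in
`Hom_{K_s}(θ, θ^s)`, a nonzero value of `S_v F` on `KsK` forces `s ∈ S₀`.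
-/

open scoped InnerProductSpace

section UnitaryRep

variable {H W : Type} [Group H] [NormedAddCommGroup W] [InnerProductSpace ℂ W]
  {ρ : H →* (W ≃ₗ[ℂ] W)}

lemma rep_apply_inv_apply (ρ : H →* (W ≃ₗ[ℂ] W)) (h : H) (x : W) : ρ h (ρ h⁻¹ x) = x := by
  rw [map_inv]; exact (ρ h).apply_symm_apply x

lemma IsUnitaryRep.inner_apply_left (hu : IsUnitaryRep ρ) (h : H) (x y : W) :
    ⟪ρ h x, y⟫_ℂ = ⟪x, ρ h⁻¹ y⟫_ℂ := by
  rw [← hu h x, rep_apply_inv_apply]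

lemma IsUnitaryRep.inner_apply_right (hu : IsUnitaryRep ρ) (h : H) (x y : W) :
    ⟪x, ρ h y⟫_ℂ = ⟪ρ h⁻¹ x, y⟫_ℂ := by
  rw [← hu h _ y, rep_apply_inv_apply]

variable [FiniteDimensional ℂ W]

lemma finrank_ne_zero_of_norm_eq_one {v : W} (hv : ‖v‖ = 1) : (Module.finrank ℂ W : ℂ) ≠ 0 := by
  have : Nontrivial W := ⟨⟨v, 0, norm_ne_zero_iff.mp (by simp [hv])⟩⟩
  exact Nat.cast_ne_zero.mpr Module.finrank_pos.ne'

lemma IsUnitaryRep.adjoint_eq_inv (hu : IsUnitaryRep ρ) (h : H) :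
    LinearMap.adjoint (ρ h).toLinearMap = (ρ h⁻¹).toLinearMap := by
  refine ((LinearMap.eq_adjoint_iff (ρ h⁻¹).toLinearMap _).mpr fun x y => ?_).symm
  exact (hu.inner_apply_right h x y).symm

variable [Fintype H]

/-- Schur's lemma applied to the `ρ`-equivariant operator `∑ₕ |ρ h v⟩⟨ρ h v|`; its trace
`|H|` fixes the scalar. -/
theorem IsIrreducibleRep.sum_smulRight_inner_orbit (hu : IsUnitaryRep ρ)
    (hirr : IsIrreducibleRep ρ) {v : W} (hv : ‖v‖ = 1) :
    ∑ h : H, (innerₛₗ ℂ (ρ h v)).smulRight (ρ h v)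
      = ((Nat.card H : ℂ) / (Module.finrank ℂ W : ℂ)) • LinearMap.id := by
  have : Nontrivial W := ⟨⟨v, 0, norm_ne_zero_iff.mp (by simp [hv])⟩⟩
  set T : Module.End ℂ W := ∑ h : H, (innerₛₗ ℂ (ρ h v)).smulRight (ρ h v)
  have hT : ∀ x, T x = ∑ h : H, ⟪ρ h v, x⟫_ℂ • ρ h v := fun x => by simp [T]
  have hcomm : ∀ (a : H) (x : W), T (ρ a x) = ρ a (T x) := by
    intro a x
    rw [hT, hT, map_sum]
    refine (Fintype.sum_equiv (Equiv.mulLeft a) _ _ fun h => ?_).symm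
    rw [Equiv.coe_mulLeft, map_mul, LinearEquiv.mul_apply, map_smul, hu]
  obtain ⟨μ, hμ⟩ := Module.End.exists_eigenvalue T
  have htop : Module.End.eigenspace T μ = ⊤ := by
    refine (hirr.2 _ fun a x hx => ?_).resolve_left hμ
    rw [Module.End.mem_eigenspace_iff] at hx ⊢
    rw [hcomm, hx, map_smul]
  have hTμ : T = μ • LinearMap.id := LinearMap.ext fun x =>
    Module.End.mem_eigenspace_iff.mp (htop ▸ Submodule.mem_top)
  have htrace : LinearMap.trace ℂ W T = Nat.card H := by
    have hρv : ∀ h : H, ⟪ρ h v, ρ h v⟫_ℂ = 1 := fun h => by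
      rw [hu, inner_self_eq_norm_sq_to_K, hv]; norm_num
    simp only [T, map_sum, LinearMap.trace_smulRight, innerₛₗ_apply_apply, hρv]
    simp [Nat.card_eq_fintype_card]
  rw [hTμ, map_smul, LinearMap.trace_id, smul_eq_mul] at htrace
  rw [hTμ, ← htrace, mul_div_cancel_right₀ _ (finrank_ne_zero_of_norm_eq_one hv)]

lemma IsIrreducibleRep.sum_inner_smul_orbit (hu : IsUnitaryRep ρ) (hirr : IsIrreducibleRep ρ)
    {v : W} (hv : ‖v‖ = 1) (y : W) :
    ∑ h : H, ⟪ρ h v, y⟫_ℂ • ρ h v = ((Nat.card H : ℂ) / (Module.finrank ℂ W : ℂ)) • y := by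
  simpa using LinearMap.congr_fun (hirr.sum_smulRight_inner_orbit hu hv) y

lemma IsIrreducibleRep.sum_inner_mul_inner_orbit (hu : IsUnitaryRep ρ)
    (hirr : IsIrreducibleRep ρ) {v : W} (hv : ‖v‖ = 1) (x y : W) :
    ∑ h : H, ⟪x, ρ h v⟫_ℂ * ⟪ρ h v, y⟫_ℂ
      = ((Nat.card H : ℂ) / (Module.finrank ℂ W : ℂ)) * ⟪x, y⟫_ℂ := by
  simpa [inner_sum, inner_smul_right, mul_comm] using
    congrArg (⟪x, ·⟫_ℂ) (hirr.sum_inner_smul_orbit hu hv y)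

lemma IsIrreducibleRep.sum_inner_apply_orbit (hu : IsUnitaryRep ρ) (hirr : IsIrreducibleRep ρ)
    {v : W} (hv : ‖v‖ = 1) (A : Module.End ℂ W) :
    ∑ h : H, ⟪ρ h v, A (ρ h v)⟫_ℂ
      = ((Nat.card H : ℂ) / (Module.finrank ℂ W : ℂ)) * LinearMap.trace ℂ W A := by
  have hA : ∑ h : H, (innerₛₗ ℂ (ρ h v)).smulRight (A (ρ h v))
      = A * ∑ h : H, (innerₛₗ ℂ (ρ h v)).smulRight (ρ h v) := by
    rw [Finset.mul_sum]
    exact Finset.sum_congr rfl fun h _ => LinearMap.ext fun x => by simp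
  have htrace := congrArg (LinearMap.trace ℂ W) hA
  rw [hirr.sum_smulRight_inner_orbit hu hv, mul_smul_comm, Module.End.mul_eq_comp,
    LinearMap.comp_id, map_smul, map_sum] at htrace
  simpa using htrace

end UnitaryRep

section GroupSums

variable {M : Type} [AddCommMonoid M]

lemma sum_sum_mul_right {ι : Type} [Fintype ι] (a : ι → G) (φ : G → M) :
    ∑ g : G, ∑ i : ι, φ (g * a i) = Nat.card ι • ∑ g : G, φ g := by
  rw [Finset.sum_comm]
  calc _ = ∑ _i : ι, ∑ g : G, φ g :=
        Finset.sum_congr rfl fun i _ => Equiv.sum_comp (Equiv.mulRight (a i)) φ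
    _ = _ := by simp [Nat.card_eq_fintype_card]

lemma sum_sum_mul_left {ι : Type} [Fintype ι] (a : ι → G) (φ : G → M) :
    ∑ g : G, ∑ i : ι, φ (a i * g) = Nat.card ι • ∑ g : G, φ g := by
  rw [Finset.sum_comm]
  calc _ = ∑ _i : ι, ∑ g : G, φ g :=
        Finset.sum_congr rfl fun i _ => Equiv.sum_comp (Equiv.mulLeft (a i)) φ
    _ = _ := by simp [Nat.card_eq_fintype_card]

lemma sum_eq_sum_subgroup (K : Subgroup G) (φ : G → M) (hφ : ∀ x : G, x ∉ K → φ x = 0) :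
    ∑ x : G, φ x = ∑ k : K, φ k := by
  rw [← Finset.sum_subset (Finset.filter_subset (· ∈ K) Finset.univ)
    fun x _ hx => hφ x (by simpa using hx)]
  exact Finset.sum_subtype _ (by simp) φ

end GroupSums

lemma convC_assoc (a b c : G → ℂ) : convC (convC a b) c = convC a (convC b c) := by
  funext g
  simp only [convC, Finset.sum_mul, Finset.mul_sum]
  rw [Finset.sum_comm]
  refine Finset.sum_congr rfl fun h _ => Fintype.sum_equiv (Equiv.mulLeft h⁻¹) _ _ fun x => ?_
  rw [Equiv.coe_mulLeft, mul_inv_rev, inv_inv, mul_assoc, mul_assoc, mul_inv_cancel_left]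

lemma starC_convC (a b : G → ℂ) : starC (convC a b) = convC (starC b) (starC a) := by
  funext g
  rw [starC, convC, map_sum]
  refine Fintype.sum_equiv (Equiv.mulLeft g) _ _ fun h => ?_
  simp only [starC, Equiv.coe_mulLeft, map_mul, mul_inv_rev, inv_inv, inv_mul_cancel_left]
  rw [mul_comm]

section Psi

variable {K : Subgroup G} {θ : ↥K →* (V ≃ₗ[ℂ] V)}

lemma psi_coe (v : V) (k : K) :
    psi K θ v k = (Module.finrank ℂ V / Nat.card K : ℂ) * ⟪θ k v, v⟫_ℂ :=
  dif_pos k.2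

lemma psi_coe_inv (hu : IsUnitaryRep θ) (v : V) (k : K) :
    psi K θ v (k : G)⁻¹ = (Module.finrank ℂ V / Nat.card K : ℂ) * ⟪v, θ k v⟫_ℂ := by
  rw [← InvMemClass.coe_inv, psi_coe, hu.inner_apply_left, inv_inv]

lemma psi_of_notMem (v : V) {g : G} (hg : g ∉ K) : psi K θ v g = 0 := dif_neg hg

lemma convC_psi_left (v : V) (f : G → ℂ) (g : G) :
    convC (psi K θ v) f g = ∑ k : K, psi K θ v k * f ((k : G)⁻¹ * g) :=
  sum_eq_sum_subgroup K _ fun x hx => by rw [psi_of_notMem v hx, zero_mul]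

lemma convC_psi_right (v : V) (f : G → ℂ) (g : G) :
    convC f (psi K θ v) g = ∑ k : K, f (g * (k : G)⁻¹) * psi K θ v k := by
  rw [convC, ← sum_eq_sum_subgroup K (fun x => f (g * x⁻¹) * psi K θ v x)
    fun x hx => by rw [psi_of_notMem v hx, mul_zero]]
  exact Fintype.sum_equiv ((Equiv.inv G).trans (Equiv.mulRight g)) _ _ fun h => by simp

lemma psi_convC_convC_psi_apply (v : V) (f : G → ℂ) (g : G) :
    convC (convC (psi K θ v) f) (psi K θ v) g
      = ∑ k₁ : K, ∑ k₂ : K, psi K θ v k₁ * psi K θ v k₂ * f ((k₁ : G)⁻¹ * g * (k₂ : G)⁻¹) := by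
  simp only [convC_psi_right, convC_psi_left, Finset.sum_mul]
  rw [Finset.sum_comm]
  refine Finset.sum_congr rfl fun k₁ _ => Finset.sum_congr rfl fun k₂ _ => ?_
  rw [mul_assoc (k₁ : G)⁻¹]
  ring

lemma starC_psi (hu : IsUnitaryRep θ) (v : V) : starC (psi K θ v) = psi K θ v := by
  funext g
  by_cases hg : g ∈ K
  · have hinv : g⁻¹ = ((⟨g, hg⟩⁻¹ : K) : G) := rfl
    rw [starC, hinv, psi_coe, psi, dif_pos hg, map_mul, inner_conj_symm, hu.inner_apply_right]
    simp [map_div₀]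
  · rw [starC, psi_of_notMem v hg, psi_of_notMem v (by simpa using hg), map_zero]

lemma psi_convC_psi (hu : IsUnitaryRep θ) (hirr : IsIrreducibleRep θ) {v : V} (hv : ‖v‖ = 1) :
    convC (psi K θ v) (psi K θ v) = psi K θ v := by
  funext g
  rw [convC_psi_left]
  by_cases hg : g ∈ K
  · set m : K := ⟨g, hg⟩
    have hd := finrank_ne_zero_of_norm_eq_one hv
    have hn : (Nat.card K : ℂ) ≠ 0 := Nat.cast_ne_zero.mpr Nat.card_pos.ne'
    have hterm : ∀ k : K, psi K θ v k * psi K θ v ((k : G)⁻¹ * g)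
        = (Module.finrank ℂ V / Nat.card K : ℂ) ^ 2 * (⟪θ m v, θ k v⟫_ℂ * ⟪θ k v, v⟫_ℂ) := by
      intro k
      have hkm : (k : G)⁻¹ * g = ((k⁻¹ * m : K) : G) := rfl
      rw [hkm, psi_coe, psi_coe, map_mul, LinearEquiv.mul_apply, hu.inner_apply_left k⁻¹, inv_inv]
      ring
    rw [Finset.sum_congr rfl fun k _ => hterm k, ← Finset.mul_sum,
      hirr.sum_inner_mul_inner_orbit hu hv, show g = (m : G) from rfl, psi_coe]
    field_simp
  · rw [psi_of_notMem v hg]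
    refine Finset.sum_eq_zero fun k _ => ?_
    rw [psi_of_notMem (g := (k : G)⁻¹ * g) v fun h => hg (by simpa using mul_mem k.2 h),
      mul_zero]

lemma psi_convC_of_mem_HSet (hu : IsUnitaryRep θ) (hirr : IsIrreducibleRep θ) {v : V}
    (hv : ‖v‖ = 1) {f : G → ℂ} (hf : f ∈ HSet K θ v) : convC (psi K θ v) f = f := by
  rw [← hf, ← convC_assoc, ← convC_assoc, psi_convC_psi hu hirr hv]

lemma convC_psi_of_mem_HSet (hu : IsUnitaryRep θ) (hirr : IsIrreducibleRep θ) {v : V}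
    (hv : ‖v‖ = 1) {f : G → ℂ} (hf : f ∈ HSet K θ v) : convC f (psi K θ v) = f := by
  rw [← hf, convC_assoc _ (psi K θ v), psi_convC_psi hu hirr hv]

end Psi

section Hecke

variable {K : Subgroup G} {θ : ↥K →* (V ≃ₗ[ℂ] V)} {F : G → (V →ₗ[ℂ] V)}

lemma IsHecke.apply_mul_mul (hF : IsHecke K θ F) (g : G) (k₁ k₂ : K) (x : V) :
    F (k₁ * g * k₂) x = θ k₂⁻¹ (F g (θ k₁⁻¹ x)) := by
  rw [hF g k₁ k₂]; rfl

lemma IsHecke.apply_mul_right (hF : IsHecke K θ F) (g : G) (k : K) (x : V) :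
    F (g * k) x = θ k⁻¹ (F g x) := by
  simpa using hF.apply_mul_mul g 1 k x

lemma IsHecke.apply_mul_left (hF : IsHecke K θ F) (g : G) (k : K) (x : V) :
    F (k * g) x = F g (θ k⁻¹ x) := by
  simpa using hF.apply_mul_mul g k 1 x

lemma IsHecke.apply_mem_ind (hF : IsHecke K θ F) (x : V) : (fun g => F g x) ∈ ind K θ :=
  fun g k => hF.apply_mul_right g k x

lemma IsHecke.star (hu : IsUnitaryRep θ) (hF : IsHecke K θ F) :
    IsHecke K θ (heckeStar F) := by
  intro g k₁ k₂
  have h := hF g⁻¹ k₂⁻¹ k₁⁻¹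
  simp only [inv_inv, InvMemClass.coe_inv] at h
  simp only [MFT.heckeStar, mul_inv_rev, ← mul_assoc, h, LinearMap.adjoint_comp,
    hu.adjoint_eq_inv, LinearMap.comp_assoc]

lemma IsHecke.mem_interSpace (hF : IsHecke K θ F) (s : G) : F s ∈ interSpace K θ s := by
  intro x hx hx'
  refine LinearMap.ext fun y => ?_
  have hs : s * (((⟨s⁻¹ * x * s, hx'⟩ : K)⁻¹ : K) : G) = (((⟨x, hx⟩ : K)⁻¹ : K) : G) * s := by
    simp [mul_assoc]
  have h := hF.apply_mul_right s (⟨s⁻¹ * x * s, hx'⟩ : K)⁻¹ y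
  rw [hs, hF.apply_mul_left, inv_inv, inv_inv] at h
  exact h

end Hecke

section InducedRep

variable {K : Subgroup G} {θ : ↥K →* (V ≃ₗ[ℂ] V)}

theorem sum_inner_of_mem_ind (hu : IsUnitaryRep θ) (hirr : IsIrreducibleRep θ) {v : V}
    (hv : ‖v‖ = 1) {f₁ f₂ : G → V} (h₁ : f₁ ∈ ind K θ) (h₂ : f₂ ∈ ind K θ) :
    ∑ g : G, ⟪f₁ g, f₂ g⟫_ℂ = Module.finrank ℂ V * ∑ g : G, ⟪f₁ g, v⟫_ℂ * ⟪v, f₂ g⟫_ℂ := by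
  have hd := finrank_ne_zero_of_norm_eq_one hv
  have hn : (Nat.card K : ℂ) ≠ 0 := Nat.cast_ne_zero.mpr Nat.card_pos.ne'
  have key : (Nat.card K / Module.finrank ℂ V : ℂ) * ∑ g : G, ⟪f₁ g, f₂ g⟫_ℂ
      = Nat.card K * ∑ g : G, ⟪f₁ g, v⟫_ℂ * ⟪v, f₂ g⟫_ℂ :=
    calc _ = ∑ g : G, ∑ k : K, ⟪f₁ g, θ k v⟫_ℂ * ⟪θ k v, f₂ g⟫_ℂ := by
          simp only [Finset.mul_sum, hirr.sum_inner_mul_inner_orbit hu hv]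
      _ = ∑ g : G, ∑ k : K, ⟪f₁ (g * k), v⟫_ℂ * ⟪v, f₂ (g * k)⟫_ℂ := by
          refine Finset.sum_congr rfl fun g _ => Finset.sum_congr rfl fun k _ => ?_
          rw [h₁, h₂, hu.inner_apply_right k (f₁ g) v, hu.inner_apply_left k v (f₂ g)]
      _ = _ := (sum_sum_mul_right (fun k : K => (k : G))
          fun g => ⟪f₁ g, v⟫_ℂ * ⟪v, f₂ g⟫_ℂ).trans (nsmul_eq_mul _ _)
  field_simp at key
  linear_combination key

theorem IsHecke.sum_inner_apply_of_mem_ind (hu : IsUnitaryRep θ) (hirr : IsIrreducibleRep θ)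
    {v : V} (hv : ‖v‖ = 1) {F : G → (V →ₗ[ℂ] V)} (hF : IsHecke K θ F) {f : G → V}
    (hf : f ∈ ind K θ) (g : G) :
    ∑ h : G, ⟪v, F (h⁻¹ * g) (f h)⟫_ℂ
      = Module.finrank ℂ V * ∑ h : G, ⟪v, f h⟫_ℂ * ⟪v, F (h⁻¹ * g) v⟫_ℂ := by
  have hstar : translate g (fun h => heckeStar F h v) ∈ ind K θ :=
    translate_mem_ind K θ ((hF.star hu).apply_mem_ind v) g
  have happ : ∀ h : G, translate g (fun h => heckeStar F h v) h
      = LinearMap.adjoint (F (h⁻¹ * g)) v := fun h => by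
    simp [translate, MFT.heckeStar, mul_inv_rev]
  simp only [← LinearMap.adjoint_inner_left, ← happ]
  rw [sum_inner_of_mem_ind hu hirr hv hstar hf]
  simp only [happ, LinearMap.adjoint_inner_left, mul_comm]

end InducedRep

section SvMap

variable {K : Subgroup G} {θ : ↥K →* (V ≃ₗ[ℂ] V)}

lemma Sv_add (v : V) (F₁ F₂ : G → (V →ₗ[ℂ] V)) : Sv v (F₁ + F₂) = Sv v F₁ + Sv v F₂ := by
  funext g
  simp only [Sv, Pi.add_apply, LinearMap.add_apply, inner_add_right, mul_add]

lemma Sv_smul (v : V) (c : ℂ) (F : G → (V →ₗ[ℂ] V)) : Sv v (c • F) = c • Sv v F := by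
  funext g
  simp only [Sv, Pi.smul_apply, LinearMap.smul_apply, inner_smul_right, smul_eq_mul]
  ring

lemma Sv_heckeStar (v : V) (F : G → (V →ₗ[ℂ] V)) : Sv v (heckeStar F) = starC (Sv v F) := by
  funext g
  simp [Sv, starC, heckeStar, LinearMap.adjoint_inner_right]

lemma Sv_heckeConv (hu : IsUnitaryRep θ) (hirr : IsIrreducibleRep θ) {v : V} (hv : ‖v‖ = 1)
    {F₁ F₂ : G → (V →ₗ[ℂ] V)} (h₁ : IsHecke K θ F₁) (h₂ : IsHecke K θ F₂) :
    Sv v (heckeConv F₁ F₂) = convC (Sv v F₂) (Sv v F₁) := by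
  funext g
  simp only [Sv, convC, heckeConv, LinearMap.sum_apply, LinearMap.comp_apply, inner_sum]
  rw [h₁.sum_inner_apply_of_mem_ind hu hirr hv (h₂.apply_mem_ind v) g, Finset.mul_sum,
    Finset.mul_sum]
  exact Finset.sum_congr rfl fun _ _ => by ring

lemma Tv_xiFun (hu : IsUnitaryRep θ) (hirr : IsIrreducibleRep θ) {v : V} (hv : ‖v‖ = 1)
    {F : G → (V →ₗ[ℂ] V)} (hF : IsHecke K θ F) {f : G → V} (hf : f ∈ ind K θ) :
    Tv K v (xiFun F f) = convC (Tv K v f) (Sv v F) := by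
  funext g
  simp only [Tv, Sv, convC, xiFun, inner_sum]
  rw [hF.sum_inner_apply_of_mem_ind hu hirr hv hf g, Finset.mul_sum, Finset.mul_sum]
  exact Finset.sum_congr rfl fun _ _ => by ring

lemma heckeInner_eq_sum_inner (hu : IsUnitaryRep θ) (hirr : IsIrreducibleRep θ) {v : V}
    (hv : ‖v‖ = 1) {F₁ F₂ : G → (V →ₗ[ℂ] V)} (h₁ : IsHecke K θ F₁) (h₂ : IsHecke K θ F₂) :
    heckeInner F₁ F₂ = ∑ g : G, ⟪F₂ g v, F₁ g v⟫_ℂ := by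
  have hd := finrank_ne_zero_of_norm_eq_one hv
  have hn : (Nat.card K : ℂ) ≠ 0 := Nat.cast_ne_zero.mpr Nat.card_pos.ne'
  have htrace : ∀ g : G,
      (Module.finrank ℂ V : ℂ)⁻¹ * LinearMap.trace ℂ V (LinearMap.adjoint (F₂ g) ∘ₗ F₁ g)
        = (Nat.card K : ℂ)⁻¹ * ∑ k : K, ⟪F₂ ((k : G)⁻¹ * g) v, F₁ ((k : G)⁻¹ * g) v⟫_ℂ := by
    intro g
    have h := hirr.sum_inner_apply_orbit hu hv (LinearMap.adjoint (F₂ g) ∘ₗ F₁ g)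
    have hmove : ∀ {F : G → (V →ₗ[ℂ] V)}, IsHecke K θ F → ∀ k : K,
        F g (θ k v) = F ((k : G)⁻¹ * g) v := fun hF k => by
      simpa using (hF.apply_mul_left g k⁻¹ v).symm
    simp only [LinearMap.comp_apply, LinearMap.adjoint_inner_right, hmove h₁, hmove h₂] at h
    rw [h]
    field_simp
  rw [heckeInner, Finset.sum_congr rfl fun g _ => htrace g, ← Finset.mul_sum,
    sum_sum_mul_left (fun k : K => (k : G)⁻¹) fun g => ⟪F₂ g v, F₁ g v⟫_ℂ, nsmul_eq_mul,
    inv_mul_cancel_left₀ hn]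

lemma innerC_Sv (hu : IsUnitaryRep θ) (hirr : IsIrreducibleRep θ) {v : V} (hv : ‖v‖ = 1)
    {F₁ F₂ : G → (V →ₗ[ℂ] V)} (h₁ : IsHecke K θ F₁) (h₂ : IsHecke K θ F₂) :
    innerC (Sv v F₁) (Sv v F₂) = Module.finrank ℂ V * heckeInner F₁ F₂ := by
  rw [heckeInner_eq_sum_inner hu hirr hv h₁ h₂,
    sum_inner_of_mem_ind hu hirr hv (h₂.apply_mem_ind v) (h₁.apply_mem_ind v), innerC,
    Finset.mul_sum, Finset.mul_sum]
  refine Finset.sum_congr rfl fun g _ => ?_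
  simp only [Sv, map_mul, map_natCast, inner_conj_symm]
  ring

end SvMap

section SvInverse

/-- The inverse of `S_v`: the `K × K`-average of `g ↦ d_θ f(g) |v⟩⟨v|`. -/
def svInv (K : Subgroup G) (θ : ↥K →* (V ≃ₗ[ℂ] V)) (v : V) (f : G → ℂ) :
    G → (V →ₗ[ℂ] V) := fun g =>
  ((Module.finrank ℂ V : ℂ) / (Nat.card K : ℂ) ^ 2) • ∑ k₁ : K, ∑ k₂ : K,
    f (k₁ * g * k₂) • ((θ k₂).toLinearMap ∘ₗ (innerₛₗ ℂ v).smulRight v ∘ₗ (θ k₁).toLinearMap)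

variable {K : Subgroup G} {θ : ↥K →* (V ≃ₗ[ℂ] V)}

lemma isHecke_svInv (v : V) (f : G → ℂ) : IsHecke K θ (svInv K θ v f) := by
  intro g a b
  simp only [svInv, ← Module.End.mul_eq_comp, Finset.mul_sum, Finset.sum_mul, mul_smul_comm,
    smul_mul_assoc]
  congr 1
  rw [← Equiv.sum_comp (Equiv.mulRight a⁻¹)]
  refine Finset.sum_congr rfl fun k₁ _ => ?_
  rw [← Equiv.sum_comp (Equiv.mulLeft b⁻¹)]
  refine Finset.sum_congr rfl fun k₂ _ => ?_
  simp only [Equiv.coe_mulRight, Equiv.coe_mulLeft, map_mul, LinearEquiv.coe_toLinearMap_mul,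
    Subgroup.coe_mul, mul_assoc, Subgroup.coe_inv, mul_inv_cancel_left, inv_mul_cancel_left]

lemma Sv_svInv (hu : IsUnitaryRep θ) (v : V) (f : G → ℂ) :
    Sv v (svInv K θ v f) = convC (convC (psi K θ v) f) (psi K θ v) := by
  funext g
  simp only [Sv, svInv, LinearMap.smul_apply, LinearMap.sum_apply, LinearMap.comp_apply,
    inner_smul_right, inner_sum, Finset.mul_sum, psi_convC_convC_psi_apply]
  refine Fintype.sum_equiv (Equiv.inv K) _ _ fun k₁ => ?_
  refine Fintype.sum_equiv (Equiv.inv K) _ _ fun k₂ => ?_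
  simp only [Equiv.inv_apply, inv_inv, InvMemClass.coe_inv, psi_coe_inv hu,
    LinearMap.smulRight_apply, innerₛₗ_apply_apply, map_smul, inner_smul_right, LinearEquiv.coe_coe]
  ring

/-- Each term of `svInv (Sv F)` is `Q k₂ ∘ F g ∘ Q k₁⁻¹` for the rank-one projections `Q k` onto
`ℂ θ(k) v`, whose sum over `K` is a scalar by Schur's lemma. -/
lemma svInv_Sv (hu : IsUnitaryRep θ) (hirr : IsIrreducibleRep θ) {v : V} (hv : ‖v‖ = 1)
    {F : G → (V →ₗ[ℂ] V)} (hF : IsHecke K θ F) : svInv K θ v (Sv v F) = F := by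
  have hd := finrank_ne_zero_of_norm_eq_one hv
  have hn : (Nat.card K : ℂ) ≠ 0 := Nat.cast_ne_zero.mpr Nat.card_pos.ne'
  set Q : K → Module.End ℂ V := fun k => (innerₛₗ ℂ (θ k v)).smulRight (θ k v) with hQ
  have hsum : ∑ k : K, Q k⁻¹ = ∑ k : K, Q k := Equiv.sum_comp (Equiv.inv K) Q
  funext g
  have hterm : ∀ k₁ k₂ : K, Sv v F (k₁ * g * k₂) •
      ((θ k₂).toLinearMap ∘ₗ (innerₛₗ ℂ v).smulRight v ∘ₗ (θ k₁).toLinearMap)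
        = (Module.finrank ℂ V : ℂ) • (Q k₂ * F g * Q k₁⁻¹) := by
    intro k₁ k₂
    refine LinearMap.ext fun x => ?_
    simp only [Sv, hQ, hF.apply_mul_mul, LinearMap.smul_apply, LinearMap.comp_apply,
      Module.End.mul_apply, LinearMap.smulRight_apply, innerₛₗ_apply_apply, LinearEquiv.coe_coe,
      map_smul, smul_smul, hu.inner_apply_left k₂ v, hu.inner_apply_right k₁ v x]
    ring_nf
  have hschur : ∑ k : K, Q k = ((Nat.card K : ℂ) / Module.finrank ℂ V) • 1 :=
    hirr.sum_smulRight_inner_orbit hu hv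
  simp only [svInv, hterm, ← Finset.smul_sum, smul_smul, ← Finset.sum_mul, ← Finset.mul_sum,
    hsum, hschur, smul_mul_assoc, mul_smul_comm, one_mul, mul_one]
  convert one_smul ℂ (F g) using 2
  field_simp

end SvInverse

section HeckeSubalgebra

variable {K : Subgroup G} {θ : ↥K →* (V ≃ₗ[ℂ] V)}

lemma psi_convC_convC_psi_mem_HSet (hu : IsUnitaryRep θ) (hirr : IsIrreducibleRep θ) {v : V}
    (hv : ‖v‖ = 1) (f : G → ℂ) : convC (convC (psi K θ v) f) (psi K θ v) ∈ HSet K θ v := by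
  change convC (convC _ _) _ = _
  rw [← convC_assoc (psi K θ v), ← convC_assoc (psi K θ v), psi_convC_psi hu hirr hv,
    convC_assoc _ (psi K θ v), psi_convC_psi hu hirr hv]

lemma convC_mem_HSet (hu : IsUnitaryRep θ) (hirr : IsIrreducibleRep θ) {v : V} (hv : ‖v‖ = 1)
    {f₁ f₂ : G → ℂ} (h₁ : f₁ ∈ HSet K θ v) (h₂ : f₂ ∈ HSet K θ v) :
    convC f₁ f₂ ∈ HSet K θ v := by
  change convC (convC _ _) _ = _
  rw [← convC_assoc, psi_convC_of_mem_HSet hu hirr hv h₁, convC_assoc,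
    convC_psi_of_mem_HSet hu hirr hv h₂]

lemma starC_mem_HSet (hu : IsUnitaryRep θ) {v : V} {f : G → ℂ} (hf : f ∈ HSet K θ v) :
    starC f ∈ HSet K θ v := by
  change convC (convC _ _) _ = _
  conv_rhs => rw [← hf]
  rw [starC_convC, starC_convC, starC_psi hu, convC_assoc]

lemma Sv_mem_HSet (hu : IsUnitaryRep θ) (hirr : IsIrreducibleRep θ) {v : V} (hv : ‖v‖ = 1)
    {F : G → (V →ₗ[ℂ] V)} (hF : IsHecke K θ F) : Sv v F ∈ HSet K θ v := by
  have h := Sv_svInv hu v (Sv v F)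
  rw [svInv_Sv hu hirr hv hF] at h
  exact h.symm

lemma interSpace_ne_bot_of_mem_HSet (hu : IsUnitaryRep θ) {v : V} {f : G → ℂ}
    (hf : f ∈ HSet K θ v) {g s : G} (hg : f g ≠ 0) {k₁ k₂ : K} (hgs : g = k₁ * s * k₂) :
    interSpace K θ s ≠ ⊥ := by
  have hF := isHecke_svInv (θ := θ) v f
  intro hbot
  have hs : svInv K θ v f s = 0 := by simpa [hbot] using hF.mem_interSpace s
  apply hg
  rw [← hf, ← Sv_svInv hu, Sv, hgs, hF.apply_mul_mul, hs, LinearMap.zero_apply, map_zero,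
    inner_zero_right, mul_zero]

end HeckeSubalgebra

/-- `H(G,K,ψ) = {ψ*f*ψ : f ∈ L(G)} = {f : f = ψ*f*ψ}` is an involutive
subalgebra of `I(G,K,ψ)`, and `S_v : ~H(G,K,θ) → L(G)`, `(S_v F) g = d_θ ⟨F g v, v⟩`, is a
bijective ∗-anti-isomorphism from the Hecke algebra `~H(G,K,θ)` onto `H(G,K,ψ)`; moreover
`(1/√d_θ) S_v` is an isometry, every `f ∈ H(G,K,ψ)` is supported in `⋃_{s ∈ S₀} K s K`, and
`T_v (ξ(F) f) = (T_v f) * (S_v F)`. -/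
theorem statement3 (K : Subgroup G) (θ : ↥K →* (V ≃ₗ[ℂ] V))
    (hu : IsUnitaryRep θ) (hirr : IsIrreducibleRep θ) (v : V) (hv : ‖v‖ = 1)
    (S : Finset G) (hS : IsDoubleCosetReps K S) :
    -- H(G,K,ψ) is contained in I(G,K,ψ) and is an involutive subalgebra of L(G):
    (HSet K θ v ⊆ {φ : G → ℂ | convC φ (psi K θ v) = φ}) ∧
    ({f : G → ℂ | ∃ f' : G → ℂ, f = convC (convC (psi K θ v) f') (psi K θ v)} = HSet K θ v) ∧
    (∀ f₁ ∈ HSet K θ v, ∀ f₂ ∈ HSet K θ v, f₁ + f₂ ∈ HSet K θ v) ∧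
    (∀ c : ℂ, ∀ f ∈ HSet K θ v, c • f ∈ HSet K θ v) ∧
    (∀ f₁ ∈ HSet K θ v, ∀ f₂ ∈ HSet K θ v, convC f₁ f₂ ∈ HSet K θ v) ∧
    (∀ f ∈ HSet K θ v, starC f ∈ HSet K θ v) ∧
    -- S_v is linear ...
    (∀ F₁ F₂ : G → (V →ₗ[ℂ] V), Sv v (F₁ + F₂) = Sv v F₁ + Sv v F₂) ∧
    (∀ (c : ℂ) (F : G → (V →ₗ[ℂ] V)), Sv v (c • F) = c • Sv v F) ∧
    -- ... maps the Hecke algebra bijectively onto H(G,K,ψ) ...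
    (∀ F : G → (V →ₗ[ℂ] V), IsHecke K θ F → Sv v F ∈ HSet K θ v) ∧
    (∀ F₁ F₂ : G → (V →ₗ[ℂ] V), IsHecke K θ F₁ → IsHecke K θ F₂ →
      Sv v F₁ = Sv v F₂ → F₁ = F₂) ∧
    (∀ f ∈ HSet K θ v, ∃ F : G → (V →ₗ[ℂ] V), IsHecke K θ F ∧ Sv v F = f) ∧
    -- ... is anti-multiplicative and preserves the involutions:
    (∀ F₁ F₂ : G → (V →ₗ[ℂ] V), IsHecke K θ F₁ → IsHecke K θ F₂ →
      Sv v (heckeConv F₁ F₂) = convC (Sv v F₂) (Sv v F₁)) ∧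
    (∀ F : G → (V →ₗ[ℂ] V), IsHecke K θ F → Sv v (heckeStar F) = starC (Sv v F)) ∧
    -- (1/√d_θ) S_v is an isometry:
    (∀ F₁ F₂ : G → (V →ₗ[ℂ] V), IsHecke K θ F₁ → IsHecke K θ F₂ →
      innerC (Sv v F₁) (Sv v F₂) = (Module.finrank ℂ V : ℂ) * heckeInner F₁ F₂) ∧
    -- support condition: every f ∈ H(G,K,ψ) is supported in ⋃_{s ∈ S₀} KsK:
    (∀ f ∈ HSet K θ v, ∀ g : G, f g ≠ 0 →
      ∃ s ∈ S, interSpace K θ s ≠ ⊥ ∧ ∃ k₁ k₂ : K, g = (k₁ : G) * s * (k₂ : G)) ∧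
    -- compatibility with ξ and T_v:
    (∀ F : G → (V →ₗ[ℂ] V), IsHecke K θ F → ∀ f ∈ ind K θ,
      Tv K v (xiFun F f) = convC (Tv K v f) (Sv v F)) := by
  refine ⟨fun f hf => convC_psi_of_mem_HSet hu hirr hv hf, ?_,
    fun f₁ h₁ f₂ h₂ => (heckeSub K θ v).add_mem h₁ h₂,
    fun c f hf => (heckeSub K θ v).smul_mem c hf,
    fun f₁ h₁ f₂ h₂ => convC_mem_HSet hu hirr hv h₁ h₂, fun f hf => starC_mem_HSet hu hf,
    Sv_add v, fun c F => Sv_smul v c F, fun F hF => Sv_mem_HSet hu hirr hv hF, ?_,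
    fun f hf => ⟨svInv K θ v f, isHecke_svInv v f, (Sv_svInv hu v f).trans hf⟩,
    fun F₁ F₂ h₁ h₂ => Sv_heckeConv hu hirr hv h₁ h₂, fun F _ => Sv_heckeStar v F,
    fun F₁ F₂ h₁ h₂ => innerC_Sv hu hirr hv h₁ h₂, ?_,
    fun F hF f hf => Tv_xiFun hu hirr hv hF hf⟩
  · ext f
    refine ⟨?_, fun hf => ⟨f, hf.symm⟩⟩
    rintro ⟨f', rfl⟩
    exact psi_convC_convC_psi_mem_HSet hu hirr hv f'
  · intro F₁ F₂ h₁ h₂ he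
    rw [← svInv_Sv hu hirr hv h₁, ← svInv_Sv hu hirr hv h₂, he]
  · intro f hf g hg
    obtain ⟨s, ⟨hs, k₁, k₂, hgs⟩, -⟩ := hS g
    exact ⟨s, hs, interSpace_ne_bot_of_mem_HSet hu hf hg hgs, k₁, k₂, hgs⟩

end MFT
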